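/- arXiv:2108.05250 — 8 statements merged into one kernel-verified Lean document; each statement's English description precedes it below -/
import Mathlib

section
/- Let N ≥ 1 and let Λ, T, Ω be fixed real N×N matrices and E = e₀ e₀ᵀ the matrix whose only nonzero entry is a 1 in position (0,0). Suppose ΩΛ + TΩ = E. Let C : ℝ → Mat(N,ℝ) be differentiable with C'(x) = ΛC(x) + C(x)T, and suppose 1 + ΩC(x) is invertible for all x. Define U(x) = C(x)(1 + ΩC(x))^{-1}. Then U'(x) = ΛU(x) + U(x)T − U(x)·E·U(x). -/
open Matrix

theorem stmt_4 (N : ℕ) [NeZero N]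
    (Λ T Ω : Matrix (Fin N) (Fin N) ℝ)
    (E : Matrix (Fin N) (Fin N) ℝ) (hE : E = Matrix.single 0 0 1)
    (hker : Ω * Λ + T * Ω = E)
    (C : ℝ → Matrix (Fin N) (Fin N) ℝ)
    (hC : ∀ x i j, HasDerivAt (fun y => C y i j) ((Λ * C x + C x * T) i j) x)
    (hinv : ∀ x, IsUnit (1 + Ω * C x))
    (U : ℝ → Matrix (Fin N) (Fin N) ℝ)
    (hU : ∀ x, U x = C x * (1 + Ω * C x)⁻¹) :
    ∀ x i j, HasDerivAt (fun y => U y i j)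
      ((Λ * U x + U x * T - U x * E * U x) i j) x := by
  letI : NormedRing (Matrix (Fin N) (Fin N) ℝ) := Matrix.linftyOpNormedRing
  letI : NormedAlgebra ℝ (Matrix (Fin N) (Fin N) ℝ) := Matrix.linftyOpNormedAlgebra
  letI : CompleteSpace (Matrix (Fin N) (Fin N) ℝ) := FiniteDimensional.complete ℝ _
  intro x i j
  -- matrix-valued derivative of C
  have hCd : ∀ y, HasDerivAt C (Λ * C y + C y * T) y := by
    intro y
    have h : HasDerivAt (fun z => ∑ i : Fin N, ∑ j : Fin N,
        Matrix.single i j (C z i j))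
        (∑ i : Fin N, ∑ j : Fin N,
          Matrix.single i j ((Λ * C y + C y * T) i j)) y := by
      refine HasDerivAt.fun_sum fun i _ => HasDerivAt.fun_sum fun j _ => ?_
      have := (hC y i j).smul_const (Matrix.single i j (1 : ℝ))
      simpa [Matrix.smul_single, smul_eq_mul] using this
    have e1 : (fun z => ∑ i : Fin N, ∑ j : Fin N,
        Matrix.single i j (C z i j)) = C := by
      funext z; exact (Matrix.matrix_eq_sum_single (C z)).symm
    have e2 : (∑ i : Fin N, ∑ j : Fin N,
        Matrix.single i j ((Λ * C y + C y * T) i j)) = Λ * C y + C y * T :=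
      (Matrix.matrix_eq_sum_single _).symm
    rwa [e1, e2] at h
  set C' : Matrix (Fin N) (Fin N) ℝ := Λ * C x + C x * T with hC'
  -- derivative of V := 1 + Ω * C
  have hVd : HasDerivAt (fun y => 1 + Ω * C y) (Ω * C') x :=
    ((hCd x).const_mul Ω).const_add 1
  obtain ⟨u, hu⟩ := hinv x
  set W : Matrix (Fin N) (Fin N) ℝ := (1 + Ω * C x)⁻¹ with hW
  -- derivative of the inverse
  have hWd : HasDerivAt (fun y => (1 + Ω * C y)⁻¹) (-(W * (Ω * C') * W)) x := by
    have h1 : HasFDerivAt Ring.inverse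
        (-(ContinuousLinearMap.mulLeftRight ℝ _ (↑u⁻¹) (↑u⁻¹))) (1 + Ω * C x) := by
      simpa [hu] using hasFDerivAt_ringInverse (𝕜 := ℝ) u
    have h2 := h1.comp_hasDerivAt x hVd
    simp only [Function.comp_def] at h2
    have hWu : W = ↑u⁻¹ := by
      rw [hW, Matrix.nonsing_inv_eq_ringInverse, ← hu, Ring.inverse_unit]
    have e : (fun y => Ring.inverse (1 + Ω * C y)) = fun y => (1 + Ω * C y)⁻¹ := by
      funext y; rw [Matrix.nonsing_inv_eq_ringInverse]
    rw [e] at h2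
    refine h2.congr_deriv ?_
    simp [hWu, mul_assoc]
  -- derivative of U
  have hUd : HasDerivAt (fun y => C y * (1 + Ω * C y)⁻¹)
      (C' * W + C x * -(W * (Ω * C') * W)) x := (hCd x).mul hWd
  have hUeq : (fun y => C y * (1 + Ω * C y)⁻¹) = U := by
    funext y; exact (hU y).symm
  rw [hUeq] at hUd
  -- key algebraic identity
  have hdet : IsUnit (1 + Ω * C x).det := (Matrix.isUnit_iff_isUnit_det _).mp ⟨u, hu⟩
  have hVW : (1 + Ω * C x) * W = 1 := Matrix.mul_nonsing_inv _ hdet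
  have hWV : W * (1 + Ω * C x) = 1 := Matrix.nonsing_inv_mul _ hdet
  have hWOC : W * (Ω * C x) = 1 - W := by
    have := hWV; rw [mul_add, mul_one] at this; linear_combination (norm := noncomm_ring) this
  have hOCW : Ω * (C x * W) = 1 - W := by
    have := hVW; rw [add_mul, one_mul] at this
    rw [← mul_assoc]; linear_combination (norm := noncomm_ring) this
  have key : C' * W + C x * -(W * (Ω * C') * W)
      = Λ * U x + U x * T - U x * E * U x := by
    rw [hU x, ← hW, ← hker, hC']
    have h1 : W * (Ω * (C x * (T * W))) = T * W - W * (T * W) := by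
      calc W * (Ω * (C x * (T * W))) = (W * (Ω * C x)) * (T * W) := by
            noncomm_ring
        _ = T * W - W * (T * W) := by rw [hWOC]; noncomm_ring
    have h2 : Ω * (C x * W) = 1 - W := hOCW
    have expand : C' * W + C x * -(W * (Ω * C') * W)
        = Λ * (C x * W) + C x * (T * W)
          - C x * (W * (Ω * (Λ * (C x * W)))) - C x * (W * (Ω * (C x * (T * W)))) := by
      rw [hC']; noncomm_ring
    rw [expand, h1]
    have expand2 : Λ * (C x * W) + (C x * W) * T
        - (C x * W) * (Ω * Λ + T * Ω) * (C x * W)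
        = Λ * (C x * W) + C x * (W * T)
          - C x * (W * (Ω * (Λ * (C x * W)))) - C x * (W * (T * (Ω * (C x * W)))) := by
      noncomm_ring
    rw [expand2, h2]
    noncomm_ring
  rw [key] at hUd
  -- project to entries
  have h := (LinearMap.toContinuousLinearMap
      ({ toFun := fun A => A i j, map_add' := fun _ _ => rfl,
         map_smul' := fun _ _ => rfl } : Matrix (Fin N) (Fin N) ℝ →ₗ[ℝ] ℝ)
      ).hasFDerivAt.comp_hasDerivAt x hUd
  exact h
end

section
/- Let N ≥ 1, let Λ, T, Ω be real N×N matrices with ΩΛ + TΩ = E, where E = e₀ e₀ᵀ. Let C₀, C₁ be N×N matrices satisfying C₁·(−T) = Λ·C₀, and suppose 1 + ΩC₀ and 1 + ΩC₁ are invertible. Define Uᵢ = Cᵢ(1 + ΩCᵢ)^{-1} for i = 0,1. Then U₁·(−T) = Λ·U₀ − U₁·E·U₀. -/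
open Matrix

theorem stmt_5 (N : ℕ) [NeZero N]
    (Λ T Ω : Matrix (Fin N) (Fin N) ℝ)
    (E : Matrix (Fin N) (Fin N) ℝ) (hE : E = Matrix.single 0 0 1)
    (hker : Ω * Λ + T * Ω = E)
    (C₀ C₁ : Matrix (Fin N) (Fin N) ℝ)
    (hdyn : C₁ * (-T) = Λ * C₀)
    (h0 : IsUnit (1 + Ω * C₀)) (h1 : IsUnit (1 + Ω * C₁))
    (U₀ U₁ : Matrix (Fin N) (Fin N) ℝ)
    (hU0 : U₀ = C₀ * (1 + Ω * C₀)⁻¹) (hU1 : U₁ = C₁ * (1 + Ω * C₁)⁻¹) :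
    U₁ * (-T) = Λ * U₀ - U₁ * E * U₀ := by
  set A₀ := 1 + Ω * C₀ with hA0def
  set A₁ := 1 + Ω * C₁ with hA1def
  have hd0 : IsUnit A₀.det := (Matrix.isUnit_iff_isUnit_det _).mp h0
  have hd1 : IsUnit A₁.det := (Matrix.isUnit_iff_isUnit_det _).mp h1
  have hA0 : A₀ * A₀⁻¹ = 1 := Matrix.mul_nonsing_inv _ hd0
  have hA1 : A₁⁻¹ * A₁ = 1 := Matrix.nonsing_inv_mul _ hd1
  have h2 : Λ * C₀ + C₁ * T = 0 := by rw [← hdyn]; noncomm_ring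
  have hker0 : Ω * Λ + T * Ω - E = 0 := by rw [hker]; exact sub_self E
  have key : (-T) * A₀ = -(A₁ * T) - E * C₀ := by
    have hdiff : (-T) * A₀ - (-(A₁ * T) - E * C₀)
        = Ω * (Λ * C₀ + C₁ * T) - (Ω * Λ + T * Ω - E) * C₀ := by
      rw [hA0def, hA1def]; noncomm_ring
    rw [h2, hker0, Matrix.mul_zero, Matrix.zero_mul, sub_zero] at hdiff
    exact sub_eq_zero.mp hdiff
  have hU1A : U₁ * A₁ = C₁ := by
    rw [hU1, Matrix.mul_assoc, hA1, Matrix.mul_one]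
  have main : U₁ * (-T) * A₀ = Λ * C₀ - U₁ * E * C₀ := by
    rw [Matrix.mul_assoc, key, Matrix.mul_sub, Matrix.mul_neg, ← Matrix.mul_assoc, hU1A,
      ← hdyn, ← Matrix.mul_assoc]
    noncomm_ring
  calc U₁ * (-T) = U₁ * (-T) * (A₀ * A₀⁻¹) := by rw [hA0, Matrix.mul_one]
    _ = (Λ * C₀ - U₁ * E * C₀) * A₀⁻¹ := by rw [← Matrix.mul_assoc, main]
    _ = Λ * U₀ - U₁ * E * U₀ := by
        rw [Matrix.sub_mul, Matrix.mul_assoc Λ, ← hU0,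
          Matrix.mul_assoc (U₁ * E), ← hU0]
end

section
/- Let N ≥ 1 and p ∈ ℝ, and let Λ, T, Ω be real N×N matrices with ΩΛ + TΩ = E (E = e₀ e₀ᵀ), such that p−Λ, p+T, p−T are invertible and Λ commutes with (p−Λ)^{-1}, T commutes with (p+T)^{-1}. Let C, C̃ be N×N matrices satisfying C̃(p−T)(p+T)^{-1} = (p+Λ)(p−Λ)^{-1}C, with 1+ΩC and 1+ΩC̃ invertible. Define U = C(1+ΩC)^{-1} and Ũ = C̃(1+ΩC̃)^{-1}. Then Ũ(p−T)(p+T)^{-1} = (p+Λ)(p−Λ)^{-1}U − 2p·Ũ(p+T)^{-1}E(p−Λ)^{-1}U. -/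
open Matrix

theorem stmt_6 (N : ℕ) [NeZero N] (p : ℝ)
    (Λ T Ω : Matrix (Fin N) (Fin N) ℝ)
    (E : Matrix (Fin N) (Fin N) ℝ) (hE : E = Matrix.single 0 0 1)
    (hker : Ω * Λ + T * Ω = E)
    (hpΛ : IsUnit (p • (1 : Matrix (Fin N) (Fin N) ℝ) - Λ))
    (hpT : IsUnit (p • (1 : Matrix (Fin N) (Fin N) ℝ) + T))
    (hpT' : IsUnit (p • (1 : Matrix (Fin N) (Fin N) ℝ) - T))
    (hcommΛ : Λ * (p • (1 : Matrix (Fin N) (Fin N) ℝ) - Λ)⁻¹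
            = (p • (1 : Matrix (Fin N) (Fin N) ℝ) - Λ)⁻¹ * Λ)
    (hcommT : T * (p • (1 : Matrix (Fin N) (Fin N) ℝ) + T)⁻¹
            = (p • (1 : Matrix (Fin N) (Fin N) ℝ) + T)⁻¹ * T)
    (C Ct : Matrix (Fin N) (Fin N) ℝ)
    (hdyn : Ct * (p • (1 : Matrix (Fin N) (Fin N) ℝ) - T)
              * (p • (1 : Matrix (Fin N) (Fin N) ℝ) + T)⁻¹
          = (p • (1 : Matrix (Fin N) (Fin N) ℝ) + Λ)
              * (p • (1 : Matrix (Fin N) (Fin N) ℝ) - Λ)⁻¹ * C)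
    (hC : IsUnit (1 + Ω * C)) (hCt : IsUnit (1 + Ω * Ct))
    (U Ut : Matrix (Fin N) (Fin N) ℝ)
    (hU : U = C * (1 + Ω * C)⁻¹) (hUt : Ut = Ct * (1 + Ω * Ct)⁻¹) :
    Ut * (p • (1 : Matrix (Fin N) (Fin N) ℝ) - T)
        * (p • (1 : Matrix (Fin N) (Fin N) ℝ) + T)⁻¹
      = (p • (1 : Matrix (Fin N) (Fin N) ℝ) + Λ)
          * (p • (1 : Matrix (Fin N) (Fin N) ℝ) - Λ)⁻¹ * U
        - (2 * p) • (Ut * (p • (1 : Matrix (Fin N) (Fin N) ℝ) + T)⁻¹ * E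
            * (p • (1 : Matrix (Fin N) (Fin N) ℝ) - Λ)⁻¹ * U) := by
  set A : Matrix (Fin N) (Fin N) ℝ := p • (1 : Matrix (Fin N) (Fin N) ℝ) - Λ with hAdef
  set A' : Matrix (Fin N) (Fin N) ℝ := p • (1 : Matrix (Fin N) (Fin N) ℝ) + Λ with hA'def
  set B : Matrix (Fin N) (Fin N) ℝ := p • (1 : Matrix (Fin N) (Fin N) ℝ) + T with hBdef
  set B' : Matrix (Fin N) (Fin N) ℝ := p • (1 : Matrix (Fin N) (Fin N) ℝ) - T with hB'def
  have hAd := (Matrix.isUnit_iff_isUnit_det _).mp hpΛ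
  have hBd := (Matrix.isUnit_iff_isUnit_det _).mp hpT
  have hA1 : A * A⁻¹ = 1 := Matrix.mul_nonsing_inv _ hAd
  have hA2 : A⁻¹ * A = 1 := Matrix.nonsing_inv_mul _ hAd
  have hB1 : B * B⁻¹ = 1 := Matrix.mul_nonsing_inv _ hBd
  have hB2 : B⁻¹ * B = 1 := Matrix.nonsing_inv_mul _ hBd
  have hB'c : B' * B⁻¹ = B⁻¹ * B' := by
    have h2 : B' = (2*p) • (1 : Matrix (Fin N) (Fin N) ℝ) - B := by
      rw [hBdef, hB'def]; module
    rw [h2, sub_mul, mul_sub, smul_mul_assoc, mul_smul_comm, hB1, hB2, one_mul, mul_one]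
  have key0 : B * Ω * A' - B' * Ω * A = (2*p) • E := by
    have h : B * Ω * A' - B' * Ω * A = (2*p) • (Ω * Λ + T * Ω) := by
      rw [hAdef, hA'def, hBdef, hB'def]
      simp only [add_mul, mul_add, sub_mul, mul_sub, smul_mul_assoc, mul_smul_comm,
        one_mul, mul_one]
      module
    rw [h, hker]
  have key : Ω * (A' * A⁻¹) - B' * (B⁻¹ * Ω) = (2*p) • (B⁻¹ * (E * A⁻¹)) := by
    have h := congrArg (fun X => B⁻¹ * X * A⁻¹) key0
    simp only [sub_mul, mul_sub, smul_mul_assoc, mul_smul_comm, mul_assoc] at h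
    rw [hA1, mul_one, ← mul_assoc B⁻¹ B, hB2, one_mul, ← mul_assoc B⁻¹ B', ← hB'c,
      mul_assoc B' B⁻¹ Ω] at h
    exact h
  -- invertibility of 1 + Ct * Ω
  have hM : IsUnit (1 + Ct * Ω) := by
    rw [Matrix.isUnit_iff_isUnit_det, Matrix.det_one_add_mul_comm]
    exact (Matrix.isUnit_iff_isUnit_det _).mp hCt
  have hCd := (Matrix.isUnit_iff_isUnit_det _).mp hC
  have hCtd := (Matrix.isUnit_iff_isUnit_det _).mp hCt
  have hUC : U * (1 + Ω * C) = C := by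
    rw [hU, mul_assoc, Matrix.nonsing_inv_mul _ hCd, mul_one]
  have hMUt : (1 + Ct * Ω) * Ut = Ct := by
    rw [hUt, ← mul_assoc, show (1 + Ct * Ω) * Ct = Ct * (1 + Ω * Ct) from by noncomm_ring,
      mul_assoc, Matrix.mul_nonsing_inv _ hCtd, mul_one]
  have hkeyC : Ct * (B' * (B⁻¹ * (Ω * C)))
      = Ct * (Ω * (A' * (A⁻¹ * C))) - (2*p) • (Ct * (B⁻¹ * (E * (A⁻¹ * C)))) := by
    have h := congrArg (fun X => Ct * (X * C)) key
    simp only [sub_mul, mul_sub, smul_mul_assoc, mul_smul_comm, mul_assoc] at h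
    rw [← h]; abel
  have h1 : Ct * (B' * B⁻¹) = A' * (A⁻¹ * C) := by rw [← mul_assoc, hdyn, mul_assoc]
  have main : Ct * (B' * B⁻¹) * (1 + Ω * C)
      = (1 + Ct * Ω) * (A' * (A⁻¹ * C)) - (2*p) • (Ct * (B⁻¹ * (E * (A⁻¹ * C)))) := by
    rw [mul_add, mul_one, add_mul, one_mul]
    have h2 : Ct * (B' * B⁻¹) * (Ω * C) = Ct * (B' * (B⁻¹ * (Ω * C))) := by
      simp only [mul_assoc]
    rw [h2, hkeyC, h1]
    simp only [mul_assoc]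
    abel
  have hMd := (Matrix.isUnit_iff_isUnit_det _).mp hM
  have hM2 : (1 + Ct * Ω)⁻¹ * (1 + Ct * Ω) = 1 := Matrix.nonsing_inv_mul _ hMd
  have hP1 : (1 + Ω * C) * (1 + Ω * C)⁻¹ = 1 := Matrix.mul_nonsing_inv _ hCd
  have hUt' : Ut = (1 + Ct * Ω)⁻¹ * Ct := by
    conv_lhs => rw [← one_mul Ut, ← hM2, mul_assoc, hMUt]
  have h := congrArg (fun X => (1 + Ct * Ω)⁻¹ * X * (1 + Ω * C)⁻¹) main
  simp only [mul_sub, sub_mul, mul_smul_comm, smul_mul_assoc, mul_assoc] at h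
  rw [hP1, mul_one, ← mul_assoc ((1 + Ct * Ω)⁻¹) (1 + Ct * Ω), hM2, one_mul] at h
  rw [hUt', hU]
  simp only [mul_assoc]
  exact h
end

section
/- Let N ≥ 1 and let Λ, T, Ω, C be real N×N matrices with T invertible, ΩΛ + TΩ = E where E = e₀ e₀ᵀ, and 1 + ΩC invertible. Set C' = Λ C T^{-1}·(−1) (i.e. C'·(−T) = ΛC), U = C(1+ΩC)^{-1}, and τ = det(1+ΩC), τ' = det(1+ΩC'). Then τ'/τ = 1 − (U T^{-1})₀₀, i.e. det(1+ΩC') = det(1+ΩC)·(1 − e₀ᵀ U T^{-1} e₀). -/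
open Matrix

theorem stmt_7 (N : ℕ) [NeZero N]
    (Λ T Ω C : Matrix (Fin N) (Fin N) ℝ)
    (hT : IsUnit T)
    (E : Matrix (Fin N) (Fin N) ℝ) (hE : E = Matrix.single 0 0 1)
    (hker : Ω * Λ + T * Ω = E)
    (hC : IsUnit (1 + Ω * C))
    (C' : Matrix (Fin N) (Fin N) ℝ) (hC' : C' = -(Λ * C * T⁻¹))
    (U : Matrix (Fin N) (Fin N) ℝ) (hU : U = C * (1 + Ω * C)⁻¹) :
    (1 + Ω * C').det = (1 + Ω * C).det * (1 - (U * T⁻¹) 0 0) := by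
  set A := 1 + Ω * C with hA
  have hdA : IsUnit A.det := (Matrix.isUnit_iff_isUnit_det A).mp hC
  have hdT : IsUnit T.det := (Matrix.isUnit_iff_isUnit_det T).mp hT
  have hAi : A * A⁻¹ = 1 := Matrix.mul_nonsing_inv A hdA
  have hTi : T * T⁻¹ = 1 := Matrix.mul_nonsing_inv T hdT
  have hiT : T⁻¹ * T = 1 := Matrix.nonsing_inv_mul T hdT
  set u : Fin N → ℝ := fun j => -((A⁻¹ * T⁻¹) j 0) with hu
  set v : Fin N → ℝ := fun j => C 0 j with hv
  have hcol : replicateCol Unit u * replicateRow Unit v = -(A⁻¹ * (T⁻¹ * (E * C))) := by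
    ext i j
    simp [hE, hu, hv, Matrix.mul_apply, Matrix.single, Finset.mul_sum, Finset.sum_mul,
      mul_assoc, ite_and, Finset.sum_ite_eq, Finset.sum_ite_eq']
  have hΩΛ : Ω * Λ = E - T * Ω := eq_sub_of_add_eq hker
  have h1 : 1 + Ω * C' = T * (A * (1 + replicateCol Unit u * replicateRow Unit v)) * T⁻¹ := by
    rw [hcol, hC']
    have : A * (1 + -(A⁻¹ * (T⁻¹ * (E * C)))) = A - T⁻¹ * (E * C) := by
      rw [mul_add, mul_neg, ← mul_assoc, hAi, one_mul, mul_one, sub_eq_add_neg]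
    rw [this, hA]
    rw [mul_sub, sub_mul, ← mul_assoc, hTi, one_mul]
    rw [mul_add, mul_one, add_mul]
    rw [hTi, show Ω * -(Λ * C * T⁻¹) = -(Ω * Λ * (C * T⁻¹)) by noncomm_ring, hΩΛ]
    noncomm_ring
  rw [h1, det_mul, det_mul, det_mul, det_one_add_replicateCol_mul_replicateRow]
  have hvu : v ⬝ᵥ u = -((U * T⁻¹) 0 0) := by
    simp [hU, hu, hv, dotProduct, Matrix.mul_apply, Finset.mul_sum, Finset.sum_mul, mul_assoc]
    rw [Finset.sum_comm]
  have hdet1 : T.det * T⁻¹.det = 1 := by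
    rw [← det_mul, hTi, det_one]
  rw [hvu]
  linear_combination (A.det * (1 - (U * T⁻¹) 0 0)) * hdet1
end

section
/- Let N ≥ 1, p ∈ ℝ, and let Λ, T, Ω, C be real N×N matrices with ΩΛ + TΩ = E (E = e₀ e₀ᵀ), p−Λ and p−T invertible, and 1+ΩC invertible. Set C̃ = (p+Λ)(p−Λ)^{-1} C (p+T)(p−T)^{-1}, assuming Λ commutes with (p−Λ)^{-1} and T with (p−T)^{-1}, and U = C(1+ΩC)^{-1}. Then det(1+ΩC̃) = det(1+ΩC)·( 1 + 2p·( (p−Λ)^{-1} U (p−T)^{-1} )₀₀ ). -/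
open Matrix

private lemma rankone_det (N : ℕ) [NeZero N] (W : Matrix (Fin N) (Fin N) ℝ) :
    (1 + W * Matrix.single (0 : Fin N) (0 : Fin N) (1:ℝ)).det = 1 + W 0 0 := by
  have h : W * Matrix.single (0 : Fin N) (0 : Fin N) (1:ℝ)
      = Matrix.replicateCol (Fin 1) (fun i : Fin N => W i 0) * Matrix.replicateRow (Fin 1) (Pi.single (0 : Fin N) (1:ℝ) : Fin N → ℝ) := by
    ext i j
    rw [Matrix.mul_apply, Matrix.mul_apply, Fin.sum_univ_one,
      Finset.sum_eq_single (0 : Fin N)]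
    · simp [Matrix.single, Pi.single_apply, eq_comm]
    · intro b _ hb
      simp [Matrix.single, Ne.symm hb]
    · simp
  erw [h, Matrix.det_one_add_replicateCol_mul_replicateRow]
  simp [dotProduct, Pi.single_apply]

theorem stmt_8 (N : ℕ) [NeZero N] (p : ℝ)
    (Λ T Ω C : Matrix (Fin N) (Fin N) ℝ)
    (E : Matrix (Fin N) (Fin N) ℝ) (hE : E = Matrix.single 0 0 1)
    (hker : Ω * Λ + T * Ω = E)
    (hpΛ : IsUnit (p • (1 : Matrix (Fin N) (Fin N) ℝ) - Λ))
    (hpT : IsUnit (p • (1 : Matrix (Fin N) (Fin N) ℝ) - T))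
    (hC : IsUnit (1 + Ω * C))
    (hcommΛ : Λ * (p • (1 : Matrix (Fin N) (Fin N) ℝ) - Λ)⁻¹
            = (p • (1 : Matrix (Fin N) (Fin N) ℝ) - Λ)⁻¹ * Λ)
    (hcommT : T * (p • (1 : Matrix (Fin N) (Fin N) ℝ) - T)⁻¹
            = (p • (1 : Matrix (Fin N) (Fin N) ℝ) - T)⁻¹ * T)
    (Ct : Matrix (Fin N) (Fin N) ℝ)
    (hCt : Ct = (p • (1 : Matrix (Fin N) (Fin N) ℝ) + Λ)
        * (p • (1 : Matrix (Fin N) (Fin N) ℝ) - Λ)⁻¹ * C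
        * ((p • (1 : Matrix (Fin N) (Fin N) ℝ) + T)
        * (p • (1 : Matrix (Fin N) (Fin N) ℝ) - T)⁻¹))
    (U : Matrix (Fin N) (Fin N) ℝ) (hU : U = C * (1 + Ω * C)⁻¹) :
    (1 + Ω * Ct).det = (1 + Ω * C).det *
      (1 + 2 * p * (((p • (1 : Matrix (Fin N) (Fin N) ℝ) - Λ)⁻¹ * U
          * (p • (1 : Matrix (Fin N) (Fin N) ℝ) - T)⁻¹) 0 0)) := by
  set A : Matrix (Fin N) (Fin N) ℝ := p • (1 : Matrix (Fin N) (Fin N) ℝ) - Λ with hAdef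
  set B : Matrix (Fin N) (Fin N) ℝ := p • (1 : Matrix (Fin N) (Fin N) ℝ) - T with hBdef
  have hAd : IsUnit A.det := (Matrix.isUnit_iff_isUnit_det A).mp hpΛ
  have hBd : IsUnit B.det := (Matrix.isUnit_iff_isUnit_det B).mp hpT
  have hCd : IsUnit (1 + Ω * C).det := (Matrix.isUnit_iff_isUnit_det _).mp hC
  have hA1 : A * A⁻¹ = 1 := Matrix.mul_nonsing_inv A hAd
  have hA2 : A⁻¹ * A = 1 := Matrix.nonsing_inv_mul A hAd
  have hB1 : B * B⁻¹ = 1 := Matrix.mul_nonsing_inv B hBd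
  have hB2 : B⁻¹ * B = 1 := Matrix.nonsing_inv_mul B hBd
  have hM1 : (1 + Ω * C) * (1 + Ω * C)⁻¹ = 1 := Matrix.mul_nonsing_inv _ hCd
  have hM2 : (1 + Ω * C)⁻¹ * (1 + Ω * C) = 1 := Matrix.nonsing_inv_mul _ hCd
  set P : Matrix (Fin N) (Fin N) ℝ := p • (1 : Matrix (Fin N) (Fin N) ℝ) with hPdef
  -- key structural identities
  have h1 : Ω * (P + Λ) = B * Ω + E := by
    have : Ω * Λ = E - T * Ω := eq_sub_of_add_eq hker
    rw [Matrix.mul_add, this, hBdef, Matrix.sub_mul, hPdef,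
      Matrix.mul_smul, Matrix.mul_one, Matrix.smul_mul, Matrix.one_mul]
    abel
  have h2 : (P + T) * Ω = Ω * A + E := by
    have hTO : T * Ω = E - Ω * Λ := by rw [← hker]; abel
    rw [Matrix.add_mul, hTO, hAdef, Matrix.mul_sub, hPdef,
      Matrix.mul_smul, Matrix.mul_one, Matrix.smul_mul, Matrix.one_mul]
    abel
  have h3 : (P + T) * B⁻¹ = (2 * p) • B⁻¹ - 1 := by
    have hPT : P + T = (2 * p) • (1 : Matrix (Fin N) (Fin N) ℝ) - B := by
      rw [hBdef, hPdef]; rw [two_mul, add_smul]; abel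
    rw [hPT, Matrix.sub_mul, Matrix.smul_mul, Matrix.one_mul, hB1]
  -- U property
  have hCU : (1 + C * Ω) * U = C := by
    have : (1 + C * Ω) * C = C * (1 + Ω * C) := by noncomm_ring
    rw [hU, ← Matrix.mul_assoc, this, Matrix.mul_assoc, hM1, Matrix.mul_one]
  -- step 1 : rewrite Ω * Ct
  have hOCt : Ω * Ct = (B * Ω + E) * (A⁻¹ * C * ((P + T) * B⁻¹)) := by
    rw [hCt]
    calc Ω * ((P + Λ) * A⁻¹ * C * ((P + T) * B⁻¹))
        = (Ω * (P + Λ)) * (A⁻¹ * C * ((P + T) * B⁻¹)) := by noncomm_ring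
      _ = (B * Ω + E) * (A⁻¹ * C * ((P + T) * B⁻¹)) := by rw [h1]
  -- step 2 : Weinstein–Aronszajn
  have step2 : (1 + Ω * Ct).det
      = (1 + (A⁻¹ * C * ((P + T) * B⁻¹)) * (B * Ω + E)).det := by
    rw [hOCt, Matrix.det_one_add_mul_comm]
  -- step 3 : the conjugation identity
  have key : 1 + (A⁻¹ * C * ((P + T) * B⁻¹)) * (B * Ω + E)
      = A⁻¹ * ((1 + C * Ω + (2 * p) • (C * (B⁻¹ * (E * A⁻¹)))) * A) := by
    have l1 : (A⁻¹ * C * ((P + T) * B⁻¹)) * (B * Ω + E)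
        = A⁻¹ * (C * ((P + T) * ((B⁻¹ * B) * Ω))) + A⁻¹ * (C * (((P + T) * B⁻¹) * E)) := by
      noncomm_ring
    have r1 : A⁻¹ * ((1 + C * Ω + (2 * p) • (C * (B⁻¹ * (E * A⁻¹)))) * A)
        = A⁻¹ * A + A⁻¹ * (C * Ω * A) + (2 * p) • (A⁻¹ * (C * (B⁻¹ * (E * (A⁻¹ * A))))) := by
      noncomm_ring
    rw [l1, hB2, Matrix.one_mul, h2, h3, r1, hA2, Matrix.mul_one]
    simp only [Matrix.mul_add, Matrix.add_mul, Matrix.mul_sub, Matrix.sub_mul,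
      Matrix.smul_mul, Matrix.mul_smul, Matrix.one_mul, Matrix.mul_one, Matrix.mul_assoc]
    abel
  -- step 4 : split the determinant
  have hdetAinv : A⁻¹.det * A.det = 1 := by
    rw [← Matrix.det_mul, hA2, Matrix.det_one]
  have split : (A⁻¹ * ((1 + C * Ω + (2 * p) • (C * (B⁻¹ * (E * A⁻¹)))) * A)).det
      = (1 + C * Ω + (2 * p) • (C * (B⁻¹ * (E * A⁻¹)))).det := by
    rw [Matrix.det_mul, Matrix.det_mul, mul_comm, mul_assoc, mul_comm A.det, hdetAinv, mul_one]
  -- step 5 : factor out (1 + CΩ)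
  have fact : 1 + C * Ω + (2 * p) • (C * (B⁻¹ * (E * A⁻¹)))
      = (1 + C * Ω) * (1 + (2 * p) • (U * (B⁻¹ * (E * A⁻¹)))) := by
    have : (1 + C * Ω) * ((2 * p) • (U * (B⁻¹ * (E * A⁻¹))))
        = (2 * p) • (((1 + C * Ω) * U) * (B⁻¹ * (E * A⁻¹))) := by
      rw [Matrix.mul_smul, Matrix.mul_assoc]
    rw [Matrix.mul_add, Matrix.mul_one, this, hCU]
  -- step 6 : compute det of rank-one part
  have rank1 : (1 + (2 * p) • (U * (B⁻¹ * (E * A⁻¹)))).det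
      = 1 + 2 * p * ((A⁻¹ * U * B⁻¹) 0 0) := by
    have e1 : (2 * p) • (U * (B⁻¹ * (E * A⁻¹)))
        = ((2 * p) • (U * B⁻¹) * E) * A⁻¹ := by
      simp only [Matrix.smul_mul, Matrix.mul_assoc]
    rw [e1, Matrix.det_one_add_mul_comm]
    have e2 : A⁻¹ * ((2 * p) • (U * B⁻¹) * E)
        = ((2 * p) • (A⁻¹ * U * B⁻¹)) * E := by
      simp only [Matrix.smul_mul, Matrix.mul_smul, Matrix.mul_assoc]
    rw [e2, hE, rankone_det]
    simp [Matrix.smul_apply]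
  -- assemble
  rw [step2, key, split, fact, Matrix.det_mul, rank1,
    Matrix.det_one_add_mul_comm]
end

section
/- Let N, 𝒩 ≥ 1, let Λ, T be real N×N matrices, E = e₀e₀ᵀ, and let U_n : ℝ → Mat(N,ℝ) for n ∈ ℤ be differentiable, 𝒩-periodic in n (U_{n+𝒩} = U_n), and satisfy U_n' = ΛU_n + U_nT − U_nEU_n and U_{n+1}·(−T) = ΛU_n − U_{n+1}EU_n for all n. Write u_n = (U_n)₀₀. Then d/dx ∑_{n=0}^{𝒩−1} u_n = ∑_{n=0}^{𝒩−1} (u_{n+1} − u_n)·u_n. -/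
open Matrix

lemma stdE_entry {N : ℕ} [NeZero N] (A B : Matrix (Fin N) (Fin N) ℝ) :
    (A * Matrix.single (0 : Fin N) (0 : Fin N) (1:ℝ) * B) 0 0 = A 0 0 * B 0 0 := by
  simp [Matrix.mul_apply, Matrix.single, Finset.sum_ite_eq, eq_comm, mul_ite, ite_and]

theorem stmt_9 (N 𝒩 : ℕ) [NeZero N] (h𝒩 : 1 ≤ 𝒩)
    (Λ T : Matrix (Fin N) (Fin N) ℝ)
    (E : Matrix (Fin N) (Fin N) ℝ) (hE : E = Matrix.single 0 0 1)
    (U : ℤ → ℝ → Matrix (Fin N) (Fin N) ℝ)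
    (hper : ∀ n x, U (n + 𝒩) x = U n x)
    (hder : ∀ n x i j, HasDerivAt (fun y => U n y i j)
      ((Λ * U n x + U n x * T - U n x * E * U n x) i j) x)
    (hdisc : ∀ n x, U (n + 1) x * (-T) = Λ * U n x - U (n + 1) x * E * U n x) :
    ∀ x : ℝ, HasDerivAt (fun y => ∑ n ∈ Finset.range 𝒩, U n y 0 0)
      (∑ n ∈ Finset.range 𝒩, (U (n + 1) x 0 0 - U n x 0 0) * U n x 0 0) x := by
  intro x
  have key : ∀ n : ℤ, (Λ * U n x + U n x * T - U n x * E * U n x) 0 0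
      = (U (n + 1) x 0 0 - U n x 0 0) * U n x 0 0
        + ((U n x - U (n + 1) x) * T) 0 0 := by
    intro n
    have h := hdisc n x
    have hΛ : Λ * U n x = U (n + 1) x * (-T) + U (n + 1) x * E * U n x := by
      rw [h]; abel
    rw [hΛ, hE]
    simp only [Matrix.add_apply, Matrix.sub_apply, Matrix.mul_neg, Matrix.sub_mul,
      Matrix.neg_apply, stdE_entry]
    ring
  have hD : HasDerivAt (fun y => ∑ n ∈ Finset.range 𝒩, U n y 0 0)
      (∑ n ∈ Finset.range 𝒩, (Λ * U n x + U n x * T - U n x * E * U n x) 0 0) x :=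
    HasDerivAt.fun_sum (fun n _ => hder n x 0 0)
  have hsum : (∑ n ∈ Finset.range 𝒩, (Λ * U n x + U n x * T - U n x * E * U n x) 0 0)
      = ∑ n ∈ Finset.range 𝒩, (U (n + 1) x 0 0 - U n x 0 0) * U n x 0 0 := by
    simp only [key]
    rw [Finset.sum_add_distrib]
    have htel : (∑ n ∈ Finset.range 𝒩, ((U (n:ℤ) x - U ((n:ℤ) + 1) x) * T) 0 0) = 0 := by
      have hts := Finset.sum_range_sub' (f := fun n : ℕ => ((U (n:ℤ) x) * T) 0 0) 𝒩
      have heq : ∀ n ∈ Finset.range 𝒩,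
          ((U (n:ℤ) x - U ((n:ℤ) + 1) x) * T) 0 0
            = ((U (n:ℤ) x) * T) 0 0 - ((U ((n+1 : ℕ):ℤ) x) * T) 0 0 := by
        intro n _
        push_cast
        simp [Matrix.sub_mul]
      rw [Finset.sum_congr rfl heq, hts]
      have h0 : U (𝒩 : ℤ) x = U 0 x := by simpa using hper 0 x
      simp [h0]
    rw [htel, add_zero]
  rwa [hsum] at hD
end

section
/- Let N ≥ 1 and let Λ, T, Ω be real N×N matrices with ΩΛ + TΩ = E, where E = e₀e₀ᵀ. Let C : ℝ → Mat(N,ℝ) be differentiable with C'(x) = ΛC(x) + C(x)T and 1 + ΩC(x) invertible for all x. Then d/dx ln det(1 + ΩC(x)) = (U(x))₀₀, where U(x) = C(x)(1 + ΩC(x))^{-1}. -/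
open Matrix Finset

lemma det_updateCol_eq (n : ℕ) (A B : Matrix (Fin n) (Fin n) ℝ) (i : Fin n) :
    (A.updateCol i (fun k => B k i)).det
    = ∑ σ : Equiv.Perm (Fin n), ((Equiv.Perm.sign σ : ℤ) : ℝ) *
        (B (σ i) i * ∏ j ∈ Finset.univ.erase i, A (σ j) j) := by
  rw [Matrix.det_apply]
  refine Finset.sum_congr rfl fun σ _ => ?_
  rw [← Finset.mul_prod_erase _ _ (Finset.mem_univ i), Matrix.updateCol_self]
  rw [Units.smul_def, zsmul_eq_mul]
  congr 2
  exact Finset.prod_congr rfl fun j hj =>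
    Matrix.updateCol_ne (Finset.ne_of_mem_erase hj)

lemma jacobi (n : ℕ) (M : ℝ → Matrix (Fin n) (Fin n) ℝ)
    (M' : Matrix (Fin n) (Fin n) ℝ) (x : ℝ)
    (h : ∀ i j, HasDerivAt (fun y => M y i j) (M' i j) x) :
    HasDerivAt (fun y => (M y).det)
      (Matrix.trace ((M x).adjugate * M')) x := by
  have h1 : HasDerivAt (fun y => (M y).det)
      (∑ σ : Equiv.Perm (Fin n), ((Equiv.Perm.sign σ : ℤ) : ℝ) *
        (∑ i, (∏ j ∈ Finset.univ.erase i, M x (σ j) j) • M' (σ i) i)) x := by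
    have hfun : (fun y => (M y).det)
        = fun y => ∑ σ : Equiv.Perm (Fin n),
            ((Equiv.Perm.sign σ : ℤ) : ℝ) * ∏ i, M y (σ i) i := by
      funext y; rw [Matrix.det_apply]
      exact Finset.sum_congr rfl fun σ _ => by rw [Units.smul_def, zsmul_eq_mul]
    rw [hfun]
    exact HasDerivAt.fun_sum fun σ _ =>
      (HasDerivAt.fun_finsetProd (fun i _ => h (σ i) i)).const_mul _
  convert h1 using 1
  have htr : Matrix.trace ((M x).adjugate * M')
      = ∑ i, ((M x).updateCol i (fun k => M' k i)).det := by
    simp only [Matrix.trace, Matrix.diag, Matrix.mul_apply]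
    refine Finset.sum_congr rfl fun i _ => ?_
    rw [← Matrix.cramer_apply]
    rw [Matrix.cramer_eq_adjugate_mulVec]
    simp [Matrix.mulVec, dotProduct]
  rw [htr]
  simp only [det_updateCol_eq]
  rw [Finset.sum_comm]
  refine Finset.sum_congr rfl fun σ _ => ?_
  rw [Finset.mul_sum]
  exact Finset.sum_congr rfl fun i _ => by rw [smul_eq_mul]; ring

lemma trace_mul_std (n : ℕ) [NeZero n] (X : Matrix (Fin n) (Fin n) ℝ) :
    Matrix.trace (X * Matrix.single (0 : Fin n) 0 1) = X 0 0 := by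
  simp [Matrix.trace, Matrix.diag, Matrix.mul_apply, Matrix.single,
    Matrix.of_apply, mul_ite, mul_one, mul_zero, ite_and, Finset.sum_ite_eq, eq_comm]

theorem stmt_15 (N : ℕ) [NeZero N]
    (Λ T Ω : Matrix (Fin N) (Fin N) ℝ)
    (E : Matrix (Fin N) (Fin N) ℝ) (hE : E = Matrix.single 0 0 1)
    (hker : Ω * Λ + T * Ω = E)
    (C : ℝ → Matrix (Fin N) (Fin N) ℝ)
    (hC : ∀ x i j, HasDerivAt (fun y => C y i j) ((Λ * C x + C x * T) i j) x)
    (hinv : ∀ x, IsUnit (1 + Ω * C x))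
    (U : ℝ → Matrix (Fin N) (Fin N) ℝ)
    (hU : ∀ x, U x = C x * (1 + Ω * C x)⁻¹) :
    ∀ x : ℝ, HasDerivAt (fun y => Real.log (1 + Ω * C y).det) (U x 0 0) x := by
  intro x
  set K := C x with hK
  set A : Matrix (Fin N) (Fin N) ℝ := 1 + Ω * K with hA
  set B : Matrix (Fin N) (Fin N) ℝ := Ω * (Λ * K + K * T) with hB
  have hdet : A.det ≠ 0 := by
    have := (Matrix.isUnit_iff_isUnit_det _).mp (hinv x)
    rw [← hK, ← hA] at this
    exact this.ne_zero
  have hentry : ∀ i j, HasDerivAt (fun y => (1 + Ω * C y) i j) (B i j) x := by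
    intro i j
    have heq : (fun y => (1 + Ω * C y) i j)
        = fun y => (1 : Matrix (Fin N) (Fin N) ℝ) i j + ∑ k, Ω i k * C y k j := by
      funext y; simp [Matrix.add_apply, Matrix.mul_apply]
    rw [heq]
    have hsum := HasDerivAt.fun_sum
      (fun k (_ : k ∈ (Finset.univ : Finset (Fin N))) => (hC x k j).const_mul (Ω i k))
    simpa [hB, ← hK, Matrix.mul_apply] using
      hsum.const_add ((1 : Matrix (Fin N) (Fin N) ℝ) i j)
  have hJ := jacobi N (fun y => 1 + Ω * C y) B x hentry
  have hlog := hJ.log (show ((1 : Matrix (Fin N) (Fin N) ℝ) + Ω * C x).det ≠ 0 by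
    rw [← hK, ← hA]; exact hdet)
  have hdu : IsUnit A.det := isUnit_iff_ne_zero.mpr hdet
  have hAl : A⁻¹ * A = 1 := Matrix.nonsing_inv_mul A hdu
  have hAr : A * A⁻¹ = 1 := Matrix.mul_nonsing_inv A hdu
  have hcomm : A⁻¹ * (Ω * K) = (Ω * K) * A⁻¹ := by
    have h1 : A⁻¹ * (1 + Ω * K) = (1 + Ω * K) * A⁻¹ := by rw [← hA, hAl, hAr]
    rw [mul_add, add_mul, mul_one, one_mul] at h1
    exact add_left_cancel h1
  have hadj : A.adjugate = A.det • A⁻¹ := by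
    rw [Matrix.inv_def, smul_smul, Ring.inverse_eq_inv', mul_inv_cancel₀ hdet, one_smul]
  have htrace : Matrix.trace (A⁻¹ * B) = U x 0 0 := by
    have hsplit : A⁻¹ * B = A⁻¹ * ((Ω * Λ) * K) + A⁻¹ * ((Ω * K) * T) := by
      rw [hB]; noncomm_ring
    have h2 : Matrix.trace (A⁻¹ * ((Ω * K) * T))
        = Matrix.trace (A⁻¹ * ((T * Ω) * K)) := by
      have e1 : A⁻¹ * ((Ω * K) * T) = (A⁻¹ * (Ω * K)) * T := by noncomm_ring
      rw [e1, hcomm, Matrix.trace_mul_comm]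
      have e2 : T * ((Ω * K) * A⁻¹) = (T * (Ω * K)) * A⁻¹ := by noncomm_ring
      rw [e2, Matrix.trace_mul_comm]
      congr 1
      noncomm_ring
    rw [hsplit, Matrix.trace_add, h2, ← Matrix.trace_add, ← mul_add, ← add_mul, hker, hE]
    calc Matrix.trace (A⁻¹ * (Matrix.single (0 : Fin N) 0 1 * K))
        = Matrix.trace ((A⁻¹ * Matrix.single (0 : Fin N) 0 1) * K) := by
          rw [mul_assoc]
      _ = Matrix.trace (K * (A⁻¹ * Matrix.single (0 : Fin N) 0 1)) :=
          Matrix.trace_mul_comm _ _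
      _ = Matrix.trace ((K * A⁻¹) * Matrix.single (0 : Fin N) 0 1) := by
          rw [mul_assoc]
      _ = (K * A⁻¹) 0 0 := trace_mul_std N _
      _ = U x 0 0 := by rw [hU x, ← hK, ← hA]
  have hval : Matrix.trace (A.adjugate * B) / A.det = U x 0 0 := by
    rw [hadj, Matrix.smul_mul, Matrix.trace_smul, smul_eq_mul, mul_comm,
      mul_div_assoc, div_self hdet, mul_one, htrace]
  have hfinal : Matrix.trace (((1 : Matrix (Fin N) (Fin N) ℝ) + Ω * C x).adjugate * B)
      / ((1 : Matrix (Fin N) (Fin N) ℝ) + Ω * C x).det = U x 0 0 := by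
    rw [← hK, ← hA]; exact hval
  convert hlog using 1
  exact hfinal.symm
end

section
/- Let u₀, u₁ : ℝ² → ℝ be smooth functions of (x₁, x₃) satisfying the Miura-type constraint ∂₁(u₀ + u₁) = −(u₀ − u₁)² identically (∂₁ = ∂/∂x₁). Suppose moreover that u₀ satisfies the potential KdV equation ∂₃u₀ = (1/4)∂₁³u₀ + (3/2)(∂₁u₀)² and u₁ satisfies ∂₃u₁ = (1/4)∂₁³u₁ + (3/2)(∂₁u₁)². Then the pair (u₀,u₁) satisfies the coupled A₁^{(1)} system: −∂₃(2u₀ − 2u₁) = ∂₁³(u₀ + 2u₁) + ∂₁[ 6(u₁−u₀)∂₁u₁ + 2(u₁−u₀)³ ]. -/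
lemma key (f g : ℝ → ℝ) (hf : ContDiff ℝ (⊤ : ℕ∞) f) (hg : ContDiff ℝ (⊤ : ℕ∞) g)
    (hc : ∀ x, deriv f x + deriv g x = -(f x - g x) ^ 2) (x : ℝ) :
    iteratedDeriv 3 (fun s => f s + 2 * g s) x +
      deriv (fun s => 6 * (g s - f s) * deriv g s + 2 * (g s - f s) ^ 3) x =
    -(1/2) * (iteratedDeriv 3 f x - iteratedDeriv 3 g x)
      - 3 * ((deriv f x) ^ 2 - (deriv g x) ^ 2) := by
  have hf' : ContDiff ℝ (⊤ : ℕ∞) f := hf.of_le (by simp)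
  have hg' : ContDiff ℝ (⊤ : ℕ∞) g := hg.of_le (by simp)
  have hf1 : ContDiff ℝ (⊤ : ℕ∞) (deriv f) := (contDiff_infty_iff_deriv.mp hf').2
  have hg1 : ContDiff ℝ (⊤ : ℕ∞) (deriv g) := (contDiff_infty_iff_deriv.mp hg').2
  have hf2 : ContDiff ℝ (⊤ : ℕ∞) (deriv (deriv f)) := (contDiff_infty_iff_deriv.mp hf1).2
  have hg2 : ContDiff ℝ (⊤ : ℕ∞) (deriv (deriv g)) := (contDiff_infty_iff_deriv.mp hg1).2
  have Df : ∀ y, HasDerivAt f (deriv f y) y := fun y => (hf'.differentiable (by simp) y).hasDerivAt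
  have Dg : ∀ y, HasDerivAt g (deriv g y) y := fun y => (hg'.differentiable (by simp) y).hasDerivAt
  have Df1 : ∀ y, HasDerivAt (deriv f) (deriv (deriv f) y) y :=
    fun y => (hf1.differentiable (by simp) y).hasDerivAt
  have Dg1 : ∀ y, HasDerivAt (deriv g) (deriv (deriv g) y) y :=
    fun y => (hg1.differentiable (by simp) y).hasDerivAt
  have Df2 : ∀ y, HasDerivAt (deriv (deriv f)) (deriv (deriv (deriv f)) y) y :=
    fun y => (hf2.differentiable (by simp) y).hasDerivAt
  have Dg2 : ∀ y, HasDerivAt (deriv (deriv g)) (deriv (deriv (deriv g)) y) y :=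
    fun y => (hg2.differentiable (by simp) y).hasDerivAt
  -- second derivative of the constraint
  have hc2 : ∀ y, deriv (deriv f) y + deriv (deriv g) y =
      -(2 * (f y - g y) * (deriv f y - deriv g y)) := by
    intro y
    have hL : HasDerivAt (fun s => deriv f s + deriv g s)
        (deriv (deriv f) y + deriv (deriv g) y) y := (Df1 y).add (Dg1 y)
    have hR : HasDerivAt (fun s => -(f s - g s) ^ 2)
        (-(2 * (f y - g y) ^ 1 * (deriv f y - deriv g y))) y :=
      (((Df y).sub (Dg y)).pow 2).neg
    have : (fun s => deriv f s + deriv g s) = fun s => -(f s - g s) ^ 2 :=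
      funext hc
    rw [this] at hL
    have := hL.unique hR
    simpa [pow_one] using this
  have hc3 : ∀ y, deriv (deriv (deriv f)) y + deriv (deriv (deriv g)) y =
      -(2 * ((deriv f y - deriv g y) * (deriv f y - deriv g y))
        + 2 * ((f y - g y) * (deriv (deriv f) y - deriv (deriv g) y))) := by
    intro y
    have hL : HasDerivAt (fun s => deriv (deriv f) s + deriv (deriv g) s)
        (deriv (deriv (deriv f)) y + deriv (deriv (deriv g)) y) y := (Df2 y).add (Dg2 y)
    have hR : HasDerivAt (fun s => -(2 * (f s - g s) * (deriv f s - deriv g s)))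
        (-((2 * (deriv f y - deriv g y)) * (deriv f y - deriv g y)
          + (2 * (f y - g y)) * (deriv (deriv f) y - deriv (deriv g) y))) y := by
      exact (((((Df y).sub (Dg y)).const_mul 2).mul ((Df1 y).sub (Dg1 y)))).neg
    have : (fun s => deriv (deriv f) s + deriv (deriv g) s)
        = fun s => -(2 * (f s - g s) * (deriv f s - deriv g s)) := funext hc2
    rw [this] at hL
    have := hL.unique hR
    rw [this]; ring
  -- iteratedDeriv as iterated deriv
  have it3 : ∀ h : ℝ → ℝ, iteratedDeriv 3 h = deriv (deriv (deriv h)) := by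
    intro h
    simp [iteratedDeriv_succ, iteratedDeriv_zero]
  -- linearity: iteratedDeriv 3 (f + 2g)
  have d1 : deriv (fun s => f s + 2 * g s) = fun s => deriv f s + 2 * deriv g s := by
    funext y; exact ((Df y).add ((Dg y).const_mul 2)).deriv
  have d2 : deriv (fun s => deriv f s + 2 * deriv g s)
      = fun s => deriv (deriv f) s + 2 * deriv (deriv g) s := by
    funext y; exact ((Df1 y).add ((Dg1 y).const_mul 2)).deriv
  have d3 : deriv (fun s => deriv (deriv f) s + 2 * deriv (deriv g) s) x
      = deriv (deriv (deriv f)) x + 2 * deriv (deriv (deriv g)) x :=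
    ((Df2 x).add ((Dg2 x).const_mul 2)).deriv
  have hit : iteratedDeriv 3 (fun s => f s + 2 * g s) x
      = deriv (deriv (deriv f)) x + 2 * deriv (deriv (deriv g)) x := by
    rw [it3, d1, d2, d3]
  -- derivative of the nonlinear term
  have hnl : deriv (fun s => 6 * (g s - f s) * deriv g s + 2 * (g s - f s) ^ 3) x
      = (6 * (deriv g x - deriv f x)) * deriv g x
        + (6 * (g x - f x)) * deriv (deriv g) x
        + 2 * (3 * (g x - f x) ^ 2 * (deriv g x - deriv f x)) := by
    have h : HasDerivAt (fun s => 6 * (g s - f s) * deriv g s + 2 * (g s - f s) ^ 3)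
        ((6 * (deriv g x - deriv f x)) * deriv g x
          + (6 * (g x - f x)) * deriv (deriv g) x
          + 2 * (3 * (g x - f x) ^ (3-1) * (deriv g x - deriv f x))) x := by
      exact ((((Dg x).sub (Df x)).const_mul 6).mul (Dg1 x)).add
        ((((Dg x).sub (Df x)).pow 3).const_mul 2)
    simpa using h.deriv
  rw [hit, hnl, it3 f, it3 g]
  have e2 := hc2 x
  have e3 := hc3 x
  linear_combination (3 * (g x - f x)) * e2 + (3 / 2 : ℝ) * e3

theorem stmt_17 (u₀ u₁ : ℝ → ℝ → ℝ)
    (hs0 : ContDiff ℝ (⊤ : ℕ∞) (fun q : ℝ × ℝ => u₀ q.1 q.2))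
    (hs1 : ContDiff ℝ (⊤ : ℕ∞) (fun q : ℝ × ℝ => u₁ q.1 q.2))
    (hc : ∀ x₁ x₃, deriv (fun s => u₀ s x₃ + u₁ s x₃) x₁ =
      -(u₀ x₁ x₃ - u₁ x₁ x₃) ^ 2)
    (h0 : ∀ x₁ x₃, deriv (fun t => u₀ x₁ t) x₃ =
      (1 / 4) * iteratedDeriv 3 (fun s => u₀ s x₃) x₁ +
      (3 / 2) * (deriv (fun s => u₀ s x₃) x₁) ^ 2)
    (h1 : ∀ x₁ x₃, deriv (fun t => u₁ x₁ t) x₃ =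
      (1 / 4) * iteratedDeriv 3 (fun s => u₁ s x₃) x₁ +
      (3 / 2) * (deriv (fun s => u₁ s x₃) x₁) ^ 2) :
    ∀ x₁ x₃,
      -(deriv (fun t => 2 * u₀ x₁ t - 2 * u₁ x₁ t) x₃) =
        iteratedDeriv 3 (fun s => u₀ s x₃ + 2 * u₁ s x₃) x₁ +
        deriv (fun s =>
          6 * (u₁ s x₃ - u₀ s x₃) * deriv (fun r => u₁ r x₃) s +
          2 * (u₁ s x₃ - u₀ s x₃) ^ 3) x₁ := by
  intro x₁ x₃
  have hf : ContDiff ℝ (⊤ : ℕ∞) (fun s => u₀ s x₃) :=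
    hs0.comp (contDiff_id.prodMk contDiff_const)
  have hg : ContDiff ℝ (⊤ : ℕ∞) (fun s => u₁ s x₃) :=
    hs1.comp (contDiff_id.prodMk contDiff_const)
  -- time differentiability
  have ht0 : Differentiable ℝ (fun t => u₀ x₁ t) :=
    (hs0.comp (contDiff_const.prodMk contDiff_id)).differentiable (by simp)
  have ht1 : Differentiable ℝ (fun t => u₁ x₁ t) :=
    (hs1.comp (contDiff_const.prodMk contDiff_id)).differentiable (by simp)
  have hlhs : deriv (fun t => 2 * u₀ x₁ t - 2 * u₁ x₁ t) x₃
      = 2 * deriv (fun t => u₀ x₁ t) x₃ - 2 * deriv (fun t => u₁ x₁ t) x₃ := by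
    have := (((ht0 x₃).hasDerivAt.const_mul 2).sub
      ((ht1 x₃).hasDerivAt.const_mul 2)).deriv
    exact this
  have hc' : ∀ x, deriv (fun s => u₀ s x₃) x + deriv (fun s => u₁ s x₃) x
      = -(u₀ x x₃ - u₁ x x₃) ^ 2 := by
    intro x
    have hd : deriv (fun s => u₀ s x₃ + u₁ s x₃) x
        = deriv (fun s => u₀ s x₃) x + deriv (fun s => u₁ s x₃) x := by
      exact (((hf.differentiable (by simp) x).hasDerivAt).add
        ((hg.differentiable (by simp) x).hasDerivAt)).deriv
    rw [← hd]; exact hc x x₃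
  have hk := key (fun s => u₀ s x₃) (fun s => u₁ s x₃) hf hg hc' x₁
  rw [hlhs, h0, h1, hk]
  ring
end
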